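/- Let u, w be an orthonormal basis of ℂ², let ψ := u u* (a single-qubit pure state, as a 2×2 matrix) and P := 2·u u* − I₂, and let ρ be any 2×2 positive semidefinite complex matrix with trace 1. For θ ∈ [0,π] and φ ∈ [0,2π], let v(θ,φ) := cos(θ/2)·u + e^{iφ}·sin(θ/2)·w and E(θ,φ) := v(θ,φ) v(θ,φ)* (a Haar-random single-qubit projective measurement in spherical coordinates). Then (1/(4π)) · ∫_{0}^{2π} ∫_{0}^{π} sign(Re tr(E(θ,φ)·ψ) − 1/2) · (Re tr(E(θ,φ)·ρ) − 1/2) · sin θ dθ dφ = (1/4) · Re tr(P·ρ), where sign denotes the real sign function. -/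

import Mathlib

/-! With `a = Re ⟨u, M u⟩`, `d = Re ⟨w, M w⟩` and `a + d = 1`, expanding `E = v v*` in the basis
`u, w` gives `Re tr(E M) - 1/2 = ((a - d) cos θ + B(φ) sin θ) / 2`. For `M = ψ` this is `cos θ / 2`,
so the sign factor is `sign (cos θ)`; for `M = ρ` the condition `a + d = 1` is `tr ρ = 1`.
Against the weight `sign (cos θ) sin θ` on `[0, π]`, `sin θ` integrates to `0` and `cos θ` to `1`,
so the `θ`-integral is `(a - d) / 2` for every `φ`, and `a - d = Re tr(P ρ)`. -/

open Matrix ComplexOrder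

noncomputable section

/-- The single-qubit pure state `cos(θ/2)·u + e^{iφ}·sin(θ/2)·w` in spherical coordinates
relative to the orthonormal basis `u, w` of `ℂ²`. -/
def blochVec (u w : Fin 2 → ℂ) (θ φ : ℝ) : Fin 2 → ℂ :=
  fun i => (Real.cos (θ / 2) : ℂ) * u i +
    Complex.exp (φ * Complex.I) * (Real.sin (θ / 2) : ℂ) * w i

/-- The rank-one projection `v v*` onto a vector `v ∈ ℂ²`. -/
def proj (v : Fin 2 → ℂ) : Matrix (Fin 2) (Fin 2) ℂ :=
  Matrix.vecMulVec v (star v)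

open Real Set intervalIntegral ComplexConjugate

theorem Real.sign_div_of_pos {x c : ℝ} (hc : 0 < c) : Real.sign (x / c) = Real.sign x := by
  rcases lt_trichotomy x 0 with hx | rfl | hx
  · rw [Real.sign_of_neg hx, Real.sign_of_neg (div_neg_of_neg_of_pos hx hc)]
  · simp
  · rw [Real.sign_of_pos hx, Real.sign_of_pos (div_pos hx hc)]

theorem integral_sign_cos_mul {f : ℝ → ℝ} (hf : Continuous f) :
    ∫ θ in 0..π, Real.sign (cos θ) * f θ = (∫ θ in 0..(π / 2), f θ) - ∫ θ in (π / 2)..π, f θ := by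
  have hπ := pi_pos
  have h₁ : EqOn f (fun θ => Real.sign (cos θ) * f θ) (Ioo 0 (π / 2)) := fun θ hθ => by
    simp [Real.sign_of_pos (cos_pos_of_mem_Ioo ⟨by linarith [hθ.1], hθ.2⟩)]
  have h₂ : EqOn (fun θ => -f θ) (fun θ => Real.sign (cos θ) * f θ) (Ioo (π / 2) π) :=
    fun θ hθ => by
      simp [Real.sign_of_neg (cos_neg_of_pi_div_two_lt_of_lt hθ.1 (by linarith [hθ.2]))]
  have hπ₁ : 0 ≤ π / 2 := by linarith
  have hπ₂ : π / 2 ≤ π := by linarith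
  rw [← integral_add_adjacent_intervals
      ((hf.intervalIntegrable _ _).congr_uIoo (by rwa [uIoo_of_le hπ₁]))
      ((hf.neg.intervalIntegrable _ _).congr_uIoo (by rwa [uIoo_of_le hπ₂])),
    ← integral_congr_Ioo_of_le hπ₁ h₁, ← integral_congr_Ioo_of_le hπ₂ h₂,
    integral_neg, sub_eq_add_neg]

theorem integral_sign_cos_mul_sin (K B : ℝ) :
    ∫ θ in 0..π, Real.sign (cos θ) * ((K * cos θ + B * sin θ) * sin θ) = K := by
  have hF : ∀ θ, HasDerivAt (fun θ => K * (sin θ ^ 2 / 2) + B * ((θ - sin θ * cos θ) / 2))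
      ((K * cos θ + B * sin θ) * sin θ) θ := fun θ => by
    refine (HasDerivAt.add ((((hasDerivAt_sin θ).pow 2).div_const 2).const_mul K)
      ((((hasDerivAt_id θ).sub ((hasDerivAt_sin θ).mul (hasDerivAt_cos θ))).div_const 2).const_mul
        B)).congr_deriv ?_
    linear_combination (-(B / 2)) * Real.sin_sq_add_cos_sq θ
  have hint (a b : ℝ) :
      IntervalIntegrable (fun θ => (K * cos θ + B * sin θ) * sin θ) MeasureTheory.volume a b :=
    Continuous.intervalIntegrable (by fun_prop) a b
  rw [integral_sign_cos_mul (by fun_prop),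
    integral_eq_sub_of_hasDerivAt (fun θ _ => hF θ) (hint _ _),
    integral_eq_sub_of_hasDerivAt (fun θ _ => hF θ) (hint _ _)]
  simp only [sin_pi_div_two, cos_pi_div_two, sin_zero, cos_zero, sin_pi, cos_pi]
  ring

theorem trace_proj_mul (v : Fin 2 → ℂ) (M : Matrix (Fin 2) (Fin 2) ℂ) :
    (proj v * M).trace = star v ⬝ᵥ M *ᵥ v := by
  rw [proj, vecMulVec_mul, trace_vecMulVec, dotProduct_comm, dotProduct_mulVec]

theorem proj_mulVec (u x : Fin 2 → ℂ) : proj u *ᵥ x = (star u ⬝ᵥ x) • u := by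
  rw [proj, vecMulVec_mulVec, op_smul_eq_smul]

theorem dotProduct_mulVec_add_smul {n R : Type*} [Fintype n] [CommRing R] [StarRing R]
    (u w : n → R) (α β : R) (M : Matrix n n R) :
    star (α • u + β • w) ⬝ᵥ M *ᵥ (α • u + β • w) =
      star α * α * (star u ⬝ᵥ M *ᵥ u) + star α * β * (star u ⬝ᵥ M *ᵥ w) +
        star β * α * (star w ⬝ᵥ M *ᵥ u) + star β * β * (star w ⬝ᵥ M *ᵥ w) := by
  simp only [star_add, star_smul, mulVec_add, mulVec_smul, add_dotProduct, dotProduct_add,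
    smul_dotProduct, dotProduct_smul, smul_eq_mul]
  ring

theorem blochVec_eq (u w : Fin 2 → ℂ) (θ φ : ℝ) :
    blochVec u w θ φ =
      (cos (θ / 2) : ℂ) • u + (Complex.exp (φ * Complex.I) * sin (θ / 2)) • w := by
  ext i; simp [blochVec]

theorem dotProduct_proj_mulVec (u x y : Fin 2 → ℂ) :
    star x ⬝ᵥ proj u *ᵥ y = (star x ⬝ᵥ u) * (star u ⬝ᵥ y) := by
  rw [proj_mulVec, dotProduct_smul, smul_eq_mul, mul_comm]

theorem proj_add_proj_eq_one {u w : Fin 2 → ℂ} (hu : star u ⬝ᵥ u = 1) (hw : star w ⬝ᵥ w = 1)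
    (huw : star u ⬝ᵥ w = 0) : proj u + proj w = 1 := by
  have hwu : star w ⬝ᵥ u = 0 := by rw [star_dotProduct, huw, star_zero]
  let N : Matrix (Fin 2) (Fin 2) ℂ := Matrix.of fun k => star (![u, w] k)
  have hN : N * Nᴴ = 1 := by
    ext k l
    have hkl : (N * Nᴴ) k l = star (![u, w] k) ⬝ᵥ ![u, w] l := by
      simp [N, mul_apply, dotProduct]
    rw [hkl]
    fin_cases k <;> fin_cases l <;> simp [hu, hw, huw, hwu]
  have hproj : Nᴴ * N = proj u + proj w := by
    ext i j
    simp [N, mul_apply, proj, vecMulVec_apply, Fin.sum_univ_two]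
  rw [← hproj, mul_eq_one_comm.mp hN]

theorem trace_eq_of_orthonormal {u w : Fin 2 → ℂ} (hu : star u ⬝ᵥ u = 1) (hw : star w ⬝ᵥ w = 1)
    (huw : star u ⬝ᵥ w = 0) (M : Matrix (Fin 2) (Fin 2) ℂ) :
    M.trace = star u ⬝ᵥ M *ᵥ u + star w ⬝ᵥ M *ᵥ w := by
  rw [← trace_proj_mul, ← trace_proj_mul, ← trace_add, ← add_mul,
    proj_add_proj_eq_one hu hw huw, one_mul]

theorem re_trace_proj_blochVec_mul_sub_half (u w : Fin 2 → ℂ) (M : Matrix (Fin 2) (Fin 2) ℂ)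
    (hM : (star u ⬝ᵥ M *ᵥ u).re + (star w ⬝ᵥ M *ᵥ w).re = 1) (θ φ : ℝ) :
    (proj (blochVec u w θ φ) * M).trace.re - 1 / 2 =
      (((star u ⬝ᵥ M *ᵥ u).re - (star w ⬝ᵥ M *ᵥ w).re) * cos θ +
        (Complex.exp (φ * Complex.I) * (star u ⬝ᵥ M *ᵥ w) +
          conj (Complex.exp (φ * Complex.I)) * (star w ⬝ᵥ M *ᵥ u)).re * sin θ) / 2 := by
  have he : conj (Complex.exp (φ * Complex.I)) * Complex.exp (φ * Complex.I) = 1 := by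
    rw [Complex.conj_mul', Complex.norm_exp_ofReal_mul_I, Complex.ofReal_one, one_pow]
  have hθ : θ = 2 * (θ / 2) := by ring
  rw [hθ, sin_two_mul, cos_two_mul', ← hθ]
  set c := cos (θ / 2)
  set s := sin (θ / 2)
  have htrace : (proj (blochVec u w θ φ) * M).trace =
      ((c ^ 2 : ℝ) : ℂ) * (star u ⬝ᵥ M *ᵥ u) +
        ((s ^ 2 : ℝ) : ℂ) * (star w ⬝ᵥ M *ᵥ w) +
        ((s * c : ℝ) : ℂ) * (Complex.exp (φ * Complex.I) * (star u ⬝ᵥ M *ᵥ w) +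
          conj (Complex.exp (φ * Complex.I)) * (star w ⬝ᵥ M *ᵥ u)) := by
    rw [trace_proj_mul, blochVec_eq, dotProduct_mulVec_add_smul]
    simp only [star_mul', RCLike.star_def, Complex.conj_ofReal, Complex.ofReal_pow,
      Complex.ofReal_mul]
    linear_combination ((s : ℂ) ^ 2 * (star w ⬝ᵥ M *ᵥ w)) * he
  rw [htrace]
  simp only [Complex.add_re, Complex.re_ofReal_mul]
  linear_combination ((c ^ 2 + s ^ 2) / 2) * hM + (1 / 2) * sin_sq_add_cos_sq (θ / 2)

theorem re_trace_proj_blochVec_mul_proj_sub_half {u w : Fin 2 → ℂ} (hu : star u ⬝ᵥ u = 1)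
    (huw : star u ⬝ᵥ w = 0) (θ φ : ℝ) :
    (proj (blochVec u w θ φ) * proj u).trace.re - 1 / 2 = cos θ / 2 := by
  have hwu : star w ⬝ᵥ u = 0 := by rw [star_dotProduct, huw, star_zero]
  rw [re_trace_proj_blochVec_mul_sub_half u w _
    (by simp only [dotProduct_proj_mulVec, hu, hwu, mul_one, zero_mul, Complex.one_re,
      Complex.zero_re, add_zero])]
  simp only [dotProduct_proj_mulVec, hu, huw, hwu, mul_one, mul_zero, zero_mul, add_zero,
    Complex.one_re, Complex.zero_re, sub_zero, one_mul]

theorem haar_random_single_qubit_general (u w : Fin 2 → ℂ)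
    (hu : ∑ i, starRingEnd ℂ (u i) * u i = 1)
    (hw : ∑ i, starRingEnd ℂ (w i) * w i = 1)
    (huw : ∑ i, starRingEnd ℂ (u i) * w i = 0)
    (ρ : Matrix (Fin 2) (Fin 2) ℂ) (htr : ρ.trace = 1) :
    (1 / (4 * Real.pi)) *
        ∫ φ in (0 : ℝ)..(2 * Real.pi), ∫ θ in (0 : ℝ)..Real.pi,
          Real.sign ((proj (blochVec u w θ φ) * proj u).trace.re - 1 / 2) *
            ((proj (blochVec u w θ φ) * ρ).trace.re - 1 / 2) * Real.sin θ =
      (1 / 4) * (((2 : ℂ) • proj u - 1) * ρ).trace.re := by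
  set a := (star u ⬝ᵥ ρ *ᵥ u).re
  set d := (star w ⬝ᵥ ρ *ᵥ w).re
  have had : a + d = 1 := by
    have := congrArg Complex.re ((trace_eq_of_orthonormal hu hw huw ρ).symm.trans htr)
    rwa [Complex.add_re, Complex.one_re] at this
  have hinner : ∀ φ, ∫ θ in (0 : ℝ)..π,
      Real.sign ((proj (blochVec u w θ φ) * proj u).trace.re - 1 / 2) *
        ((proj (blochVec u w θ φ) * ρ).trace.re - 1 / 2) * Real.sin θ = (a - d) / 2 := by
    intro φ
    simp_rw [re_trace_proj_blochVec_mul_proj_sub_half hu huw,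
      re_trace_proj_blochVec_mul_sub_half u w ρ had, Real.sign_div_of_pos two_pos,
      mul_div_assoc', div_mul_eq_mul_div, mul_assoc, integral_div, integral_sign_cos_mul_sin]
    rfl
  have hrhs : (((2 : ℂ) • proj u - 1) * ρ).trace.re = a - d := by
    rw [sub_mul, smul_mul_assoc, one_mul, trace_sub, trace_smul, trace_proj_mul, htr]
    simp only [smul_eq_mul, Complex.sub_re, Complex.mul_re, Complex.re_ofNat, Complex.im_ofNat,
      zero_mul, sub_zero, Complex.one_re]
    linarith
  rw [integral_congr fun φ _ => hinner φ, integral_const, smul_eq_mul, hrhs]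
  field_simp
  ring

/-- Expectation, over a Haar-random single-qubit projective measurement `E`, of
`sign(tr(E ψ) − 1/2)·(tr(E ρ) − 1/2)`, where `ψ = u u*` is a pure state: it equals
`(1/4)·tr(P ρ)` with `P = 2·u u* − I₂`. -/
theorem haar_random_single_qubit (u w : Fin 2 → ℂ)
    (hu : ∑ i, starRingEnd ℂ (u i) * u i = 1)
    (hw : ∑ i, starRingEnd ℂ (w i) * w i = 1)
    (huw : ∑ i, starRingEnd ℂ (u i) * w i = 0)
    (ρ : Matrix (Fin 2) (Fin 2) ℂ) (hρ : ρ.PosSemidef) (htr : ρ.trace = 1) :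
    (1 / (4 * Real.pi)) *
        ∫ φ in (0 : ℝ)..(2 * Real.pi), ∫ θ in (0 : ℝ)..Real.pi,
          Real.sign ((proj (blochVec u w θ φ) * proj u).trace.re - 1 / 2) *
            ((proj (blochVec u w θ φ) * ρ).trace.re - 1 / 2) * Real.sin θ =
      (1 / 4) * (((2 : ℂ) • proj u - 1) * ρ).trace.re :=
  haar_random_single_qubit_general u w hu hw huw ρ htr
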